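/- Let S, T, C ∈ L†(D,H) satisfy the weak commutation relation [S,T] = C, i.e. ⟨Tξ, S†η⟩ − ⟨Sξ, T†η⟩ = ⟨Cξ, η⟩ for all ξ, η ∈ D. Then for every φ ∈ D with ‖φ‖ = 1: max{(ΔS)_φ, (ΔS†)_φ}·max{(ΔT)_φ, (ΔT†)_φ} ≥ |⟨φ, Cφ⟩|/2. -/

import Mathlib

/-!
Write `P x = x - ⟪φ, x⟫ • φ` for the projection onto `φ`'s orthogonal complement. For a unit
vector `φ`, `(ΔA)_φ = ‖P (A φ)‖`, and `⟪P a, P b⟫ = ⟪a, b⟫ - ⟪a, φ⟫ ⟪φ, b⟫` is a covariance.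
By the adjoint relations the covariance of `(T φ, S† φ)` minus that of `(S φ, T† φ)` is
`⟪T φ, S† φ⟫ - ⟪S φ, T† φ⟫ = ⟪C φ, φ⟫`, and Cauchy–Schwarz bounds each covariance by
`(ΔT)(ΔS†)`, respectively `(ΔS)(ΔT†)`.
-/

/-- The uncertainty (ΔA)_φ = (‖Aφ‖² − |⟨Aφ, φ⟩|²)^{1/2} of an operator A ∈ L†(D,H) in the
state φ ∈ D. -/
noncomputable def uncertainty {H : Type*} [NormedAddCommGroup H] [InnerProductSpace ℂ H]
    {D : Submodule ℂ H} (A : D →ₗ[ℂ] H) (φ : D) : ℝ :=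
  Real.sqrt (‖A φ‖ ^ 2 - ‖(inner ℂ (A φ) (φ : H) : ℂ)‖ ^ 2)

open scoped InnerProductSpace

section Covariance

variable {𝕜 E : Type*} [RCLike 𝕜] [NormedAddCommGroup E] [InnerProductSpace 𝕜 E]
  {u : E} (hu : ‖u‖ = 1)

include hu

theorem inner_sub_inner_smul_sub_inner_smul (a b : E) :
    ⟪a - ⟪u, a⟫_𝕜 • u, b - ⟪u, b⟫_𝕜 • u⟫_𝕜 = ⟪a, b⟫_𝕜 - ⟪a, u⟫_𝕜 * ⟪u, b⟫_𝕜 := by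
  simp only [inner_sub_left, inner_sub_right, inner_smul_left, inner_smul_right,
    inner_self_eq_norm_sq_to_K, hu, RCLike.ofReal_one, one_pow, inner_conj_symm]
  ring

theorem norm_sub_inner_smul_sq (a : E) :
    ‖a - ⟪u, a⟫_𝕜 • u‖ ^ 2 = ‖a‖ ^ 2 - ‖⟪a, u⟫_𝕜‖ ^ 2 := by
  rw [@norm_sq_eq_re_inner 𝕜, inner_sub_inner_smul_sub_inner_smul hu, ← inner_conj_symm u a,
    RCLike.mul_conj, map_sub, ← norm_sq_eq_re_inner, ← RCLike.ofReal_pow, RCLike.ofReal_re]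

theorem norm_inner_sub_inner_mul_inner_le (a b : E) :
    ‖⟪a, b⟫_𝕜 - ⟪a, u⟫_𝕜 * ⟪u, b⟫_𝕜‖ ≤ ‖a - ⟪u, a⟫_𝕜 • u‖ * ‖b - ⟪u, b⟫_𝕜 • u‖ :=
  inner_sub_inner_smul_sub_inner_smul (𝕜 := 𝕜) hu a b ▸ norm_inner_le_norm _ _

end Covariance

theorem uncertainty_eq_norm_sub_inner_smul {H : Type*} [NormedAddCommGroup H]
    [InnerProductSpace ℂ H] {D : Submodule ℂ H} (A : D →ₗ[ℂ] H) {φ : D} (hφ : ‖(φ : H)‖ = 1) :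
    uncertainty A φ = ‖A φ - ⟪(φ : H), A φ⟫_ℂ • (φ : H)‖ := by
  rw [uncertainty, ← norm_sub_inner_smul_sq hφ, Real.sqrt_sq (norm_nonneg _)]

theorem uncertainty_nonneg {H : Type*} [NormedAddCommGroup H] [InnerProductSpace ℂ H]
    {D : Submodule ℂ H} (A : D →ₗ[ℂ] H) (φ : D) : 0 ≤ uncertainty A φ :=
  Real.sqrt_nonneg _

theorem two_mul_max_mul_max_ge {s s' t t' : ℝ} (hs : 0 ≤ s) (hs' : 0 ≤ s') (ht : 0 ≤ t)
    (ht' : 0 ≤ t') : t * s' + s * t' ≤ 2 * (max s s' * max t t') := by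
  have h₁ : t * s' ≤ max t t' * max s s' :=
    mul_le_mul (le_max_left _ _) (le_max_right _ _) hs' (ht.trans (le_max_left _ _))
  have h₂ : s * t' ≤ max s s' * max t t' :=
    mul_le_mul (le_max_left _ _) (le_max_right _ _) ht' (hs.trans (le_max_left _ _))
  linarith

theorem uncertainty_relation_UR1_general_general
    {H : Type*} [NormedAddCommGroup H] [InnerProductSpace ℂ H]
    (D : Submodule ℂ H)
    (S Sd T Td C : D →ₗ[ℂ] H)
    (hS : ∀ ξ η : D, (inner ℂ (S ξ) (η : H) : ℂ) = inner ℂ (ξ : H) (Sd η))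
    (hT : ∀ ξ η : D, (inner ℂ (T ξ) (η : H) : ℂ) = inner ℂ (ξ : H) (Td η))
    -- weak commutation relation [S,T] = C
    (hCR : ∀ ξ η : D,
      (inner ℂ (T ξ) (Sd η) : ℂ) - (inner ℂ (S ξ) (Td η) : ℂ) = (inner ℂ (C ξ) (η : H) : ℂ)) :
    ∀ φ : D, ‖(φ : H)‖ = 1 →
      max (uncertainty S φ) (uncertainty Sd φ) * max (uncertainty T φ) (uncertainty Td φ)
        ≥ ‖(inner ℂ ((φ : H)) (C φ) : ℂ)‖ / 2 := by
  intro φ hφ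
  have hcov : ⟪C φ, (φ : H)⟫_ℂ =
      (⟪T φ, Sd φ⟫_ℂ - ⟪T φ, (φ : H)⟫_ℂ * ⟪(φ : H), Sd φ⟫_ℂ) -
        (⟪S φ, Td φ⟫_ℂ - ⟪S φ, (φ : H)⟫_ℂ * ⟪(φ : H), Td φ⟫_ℂ) := by
    rw [← hS, ← hT, ← hCR]
    ring
  have hbound : ‖⟪(φ : H), C φ⟫_ℂ‖ ≤
      uncertainty T φ * uncertainty Sd φ + uncertainty S φ * uncertainty Td φ := by
    simp only [uncertainty_eq_norm_sub_inner_smul _ hφ]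
    rw [norm_inner_symm, hcov]
    exact (norm_sub_le _ _).trans (add_le_add (norm_inner_sub_inner_mul_inner_le hφ _ _)
      (norm_inner_sub_inner_mul_inner_le hφ _ _))
  have hmax := two_mul_max_mul_max_ge (uncertainty_nonneg S φ) (uncertainty_nonneg Sd φ)
    (uncertainty_nonneg T φ) (uncertainty_nonneg Td φ)
  linarith

theorem uncertainty_relation_UR1_general
    {H : Type*} [NormedAddCommGroup H] [InnerProductSpace ℂ H]
    (D : Submodule ℂ H) (hD : Dense (D : Set H))
    (S Sd T Td C Cd : D →ₗ[ℂ] H)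
    (hS : ∀ ξ η : D, (inner ℂ (S ξ) (η : H) : ℂ) = inner ℂ (ξ : H) (Sd η))
    (hT : ∀ ξ η : D, (inner ℂ (T ξ) (η : H) : ℂ) = inner ℂ (ξ : H) (Td η))
    (hC : ∀ ξ η : D, (inner ℂ (C ξ) (η : H) : ℂ) = inner ℂ (ξ : H) (Cd η))
    -- weak commutation relation [S,T] = C
    (hCR : ∀ ξ η : D,
      (inner ℂ (T ξ) (Sd η) : ℂ) - (inner ℂ (S ξ) (Td η) : ℂ) = (inner ℂ (C ξ) (η : H) : ℂ)) :
    ∀ φ : D, ‖(φ : H)‖ = 1 →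
      max (uncertainty S φ) (uncertainty Sd φ) * max (uncertainty T φ) (uncertainty Td φ)
        ≥ ‖(inner ℂ ((φ : H)) (C φ) : ℂ)‖ / 2 :=
  uncertainty_relation_UR1_general_general D S Sd T Td C hS hT hCR
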